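/- For 0<|q|<1 and nonzero x, y: j(x;q) j(y;q^6) = ∑_{i=-2}^{2} (-1)^i q^{(i^2-i)/2} x^i j(-q^{3i+9} x^3 y^{-1}; q^{15}) j(q^{2i+1} x^2 y; q^{10}), where j(x;q) := (x;q)_∞(q/x;q)_∞(q;q)_∞. -/

import Mathlib

noncomputable def qPochInf (x q : ℂ) : ℂ := ∏' i : ℕ, (1 - q ^ i * x)

noncomputable def jt (x q : ℂ) : ℂ := qPochInf x q * qPochInf (q / x) q * qPochInf q q

noncomputable def appellLerch (x q z : ℂ) : ℂ :=
  (jt z q)⁻¹ * ∑' r : ℤ, (-1) ^ r * q ^ (r * (r - 1) / 2) * z ^ r / (1 - q ^ (r - 1) * x * z)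

noncomputable def qPochFin (x q : ℂ) (n : ℕ) : ℂ := ∏ i ∈ Finset.range n, (1 - q ^ i * x)

/-!
By the Jacobi triple product, `j(x;q) = ∑ₖ (-1)^k q^(k(k-1)/2) x^k`; it is the limit as `N → ∞`
(dominated convergence) of the finite form
`(x;q)_N (q/x;q)_N = ∑ₖ (-1)^k q^(k(k-1)/2) x^k [2N, N+k]_q`, proved by induction on `N` from the
Pascal rules for Gaussian binomials. Hence the left side is a sum over `(n, m) ∈ ℤ²` and the
right side a sum over `(i, a, b) ∈ {-2, …, 2} × ℤ²`; the substitution `n = i + 3a + 2b`,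
`m = b - a` is a bijection between the index sets (the matrix `[[3, 2], [-1, 1]]` has
determinant 5) that matches the summands term by term.
-/

open Filter Topology

namespace JacobiTripleProduct

variable {q : ℂ}

lemma qPochFin_succ (x q : ℂ) (n : ℕ) : qPochFin x q (n + 1) = qPochFin x q n * (1 - q ^ n * x) :=
  Finset.prod_range_succ _ _

lemma qPochFin_zero (x q : ℂ) : qPochFin x q 0 = 1 := Finset.prod_range_zero _

lemma one_sub_pow_mul_self_ne_zero (hq : ‖q‖ < 1) (i : ℕ) : 1 - q ^ i * q ≠ 0 := by
  intro h
  have : ‖q ^ i * q‖ < 1 := by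
    rw [← pow_succ, norm_pow]; exact pow_lt_one₀ (norm_nonneg q) hq (Nat.succ_ne_zero i)
  simp [← sub_eq_zero.mp h] at this

lemma qPochFin_self_ne_zero (hq : ‖q‖ < 1) (n : ℕ) : qPochFin q q n ≠ 0 :=
  Finset.prod_ne_zero_iff.mpr fun i _ => one_sub_pow_mul_self_ne_zero hq i

noncomputable def qBinom (q : ℂ) (n : ℕ) (j : ℤ) : ℂ :=
  if 0 ≤ j ∧ j ≤ n then
    qPochFin q q n / (qPochFin q q j.toNat * qPochFin q q (n - j.toNat))
  else 0

lemma qBinom_of_neg {n : ℕ} {j : ℤ} (hj : j < 0) : qBinom q n j = 0 :=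
  if_neg (by omega)

lemma qBinom_of_lt {n : ℕ} {j : ℤ} (hj : n < j) : qBinom q n j = 0 :=
  if_neg (by omega)

lemma qBinom_add_natCast (m k : ℕ) :
    qBinom q (m + k) m = qPochFin q q (m + k) / (qPochFin q q m * qPochFin q q k) := by
  rw [qBinom, if_pos (by omega), Int.toNat_natCast, Nat.add_sub_cancel_left]

lemma qBinom_symm (n : ℕ) (j : ℤ) : qBinom q n (n - j) = qBinom q n j := by
  unfold qBinom
  by_cases hj : 0 ≤ j ∧ j ≤ n
  · rw [if_pos (by omega), if_pos hj, mul_comm,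
      show (n - j : ℤ).toNat = n - j.toNat by omega, show n - (n - j.toNat) = j.toNat by omega]
  · rw [if_neg (by omega), if_neg hj]

lemma qBinom_zero (hq : ‖q‖ < 1) (n : ℕ) : qBinom q n 0 = 1 := by
  rw [qBinom, if_pos (by omega), Int.toNat_zero, Nat.sub_zero, qPochFin_zero, one_mul,
    div_self (qPochFin_self_ne_zero hq n)]

lemma qBinom_self (hq : ‖q‖ < 1) (n : ℕ) : qBinom q n n = 1 := by
  rw [← sub_zero (n : ℤ), qBinom_symm, qBinom_zero hq]

lemma qBinom_succ (hq : ‖q‖ < 1) (n : ℕ) (j : ℤ) :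
    qBinom q (n + 1) j = qBinom q n j + q ^ ((n : ℤ) + 1 - j) * qBinom q n (j - 1) := by
  rcases lt_trichotomy j 0 with hj | rfl | hj
  · rw [qBinom_of_neg hj, qBinom_of_neg hj, qBinom_of_neg (by omega), mul_zero, add_zero]
  · rw [qBinom_zero hq, qBinom_zero hq, qBinom_of_neg (by omega), mul_zero, add_zero]
  rcases lt_trichotomy j (n + 1) with hjn | rfl | hjn
  · obtain ⟨m, k, rfl, rfl⟩ : ∃ m k : ℕ, j = (m + 1 : ℕ) ∧ n = m + 1 + k :=
      ⟨j.toNat - 1, n - j.toNat, by omega, by omega⟩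
    rw [show m + 1 + k + 1 = (m + 1) + (k + 1) by ring, qBinom_add_natCast,
      qBinom_add_natCast, show ((m + 1 : ℕ) : ℤ) - 1 = (m : ℕ) by push_cast; ring,
      show m + 1 + k = m + (k + 1) by ring, qBinom_add_natCast,
      show ((m + (k + 1) : ℕ) : ℤ) + 1 - (m + 1 : ℕ) = (k + 1 : ℕ) by push_cast; ring,
      zpow_natCast, show m + 1 + (k + 1) = m + (k + 1) + 1 by ring, qPochFin_succ,
      qPochFin_succ _ _ m, qPochFin_succ _ _ k]
    have hP := qPochFin_self_ne_zero hq
    have hm := mul_ne_zero (hP m) (one_sub_pow_mul_self_ne_zero hq m)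
    have hk := mul_ne_zero (hP k) (one_sub_pow_mul_self_ne_zero hq k)
    rw [← mul_div_assoc, div_add_div _ _ (mul_ne_zero hm (hP k)) (mul_ne_zero (hP m) hk),
      div_eq_div_iff (mul_ne_zero hm hk)
        (mul_ne_zero (mul_ne_zero hm (hP k)) (mul_ne_zero (hP m) hk))]
    ring
  · rw [show (n : ℤ) + 1 = (n + 1 : ℕ) by push_cast; ring, qBinom_self hq,
      qBinom_of_lt (by omega), show ((n + 1 : ℕ) : ℤ) - 1 = n by push_cast; ring, qBinom_self hq]
    simp
  · rw [qBinom_of_lt (by push_cast; omega), qBinom_of_lt (by omega), qBinom_of_lt (by omega),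
      mul_zero, add_zero]

lemma qBinom_succ' (hq : ‖q‖ < 1) (n : ℕ) (j : ℤ) :
    qBinom q (n + 1) j = q ^ j * qBinom q n j + qBinom q n (j - 1) := by
  rw [← qBinom_symm (n + 1) j, qBinom_succ hq,
    show ((n + 1 : ℕ) : ℤ) - j = n - (j - 1) by push_cast; ring,
    show (n : ℤ) - (j - 1) - 1 = n - j by ring, qBinom_symm, qBinom_symm,
    show (n : ℤ) + 1 - (n - (j - 1)) = j by ring, add_comm]

lemma qBinom_add_two (hq : ‖q‖ < 1) (hq0 : q ≠ 0) (n : ℕ) (j : ℤ) :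
    qBinom q (n + 2) j = q ^ j * qBinom q n j + (1 + q ^ (n + 1)) * qBinom q n (j - 1)
      + q ^ ((n : ℤ) + 2 - j) * qBinom q n (j - 2) := by
  have hpow : q ^ ((n : ℤ) + 2 - j) * q ^ (j - 1) = q ^ (n + 1) := by
    rw [← zpow_add₀ hq0, ← zpow_natCast]; congr 1; push_cast; ring
  rw [qBinom_succ hq (n + 1), qBinom_succ' hq n, qBinom_succ' hq n (j - 1),
    show ((n + 1 : ℕ) : ℤ) + 1 - j = n + 2 - j by push_cast; ring, show j - 1 - 1 = j - 2 by ring]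
  linear_combination qBinom q n (j - 1) * hpow

variable {x : ℂ}

noncomputable def thetaTerm (q x : ℂ) (k : ℤ) : ℂ := (-1) ^ k * q ^ (k * (k - 1) / 2) * x ^ k

lemma thetaTerm_zero : thetaTerm q x 0 = 1 := by simp [thetaTerm]

lemma thetaTerm_add_one (hq0 : q ≠ 0) (hx : x ≠ 0) (k : ℤ) :
    thetaTerm q x (k + 1) = -(q ^ k * x * thetaTerm q x k) := by
  rw [thetaTerm, thetaTerm, show (k + 1) * (k + 1 - 1) = k * (k - 1) + k * 2 by ring,
    Int.add_mul_ediv_right _ _ two_ne_zero, zpow_add₀ hq0, zpow_add_one₀ hx,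
    zpow_add_one₀ (by norm_num)]
  ring

lemma thetaTerm_neg (hq0 : q ≠ 0) (k : ℤ) : thetaTerm q x (-k) = thetaTerm q (q / x) k := by
  rw [thetaTerm, thetaTerm, show -k * (-k - 1) = k * (k - 1) + k * 2 by ring,
    Int.add_mul_ediv_right _ _ two_ne_zero, zpow_add₀ hq0]
  simp only [zpow_neg, ← inv_zpow, inv_neg_one, div_eq_mul_inv, mul_zpow]
  ring

lemma thetaTerm_mul_qBinom_succ (hq : ‖q‖ < 1) (hq0 : q ≠ 0) (hx : x ≠ 0) (N : ℕ) (k : ℤ) :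
    thetaTerm q x k * qBinom q (2 * (N + 1)) (k + (N + 1 : ℕ)) =
      -(q ^ (N + 1) * x⁻¹) * (thetaTerm q x (k + 1) * qBinom q (2 * N) (k + 1 + N))
      + (1 + q ^ (2 * N + 1)) * (thetaTerm q x k * qBinom q (2 * N) (k + N))
      - q ^ N * x * (thetaTerm q x (k - 1) * qBinom q (2 * N) (k - 1 + N)) := by
  have hk : thetaTerm q x k = -(q ^ (k - 1) * x * thetaTerm q x (k - 1)) := by
    rw [← thetaTerm_add_one hq0 hx, sub_add_cancel]
  have e₁ : q ^ (k + 1 + N) = q ^ k * q ^ (N + 1) := by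
    rw [← zpow_natCast, ← zpow_add₀ hq0]; push_cast; ring_nf
  have e₂ : q ^ (k - 1) * q ^ (2 * N + 2 - (k + 1 + N)) = q ^ N := by
    rw [← zpow_add₀ hq0, ← zpow_natCast]; congr 1; ring
  rw [show 2 * (N + 1) = 2 * N + 2 by ring, qBinom_add_two hq hq0, thetaTerm_add_one hq0 hx, hk]
  push_cast
  rw [show k + (N + 1) - 1 = k + N by ring, show k + (N + 1) - 2 = k - 1 + N by ring,
    show k + (N + 1) = k + 1 + N by ring, e₁]
  field_simp
  linear_combination -(thetaTerm q x (k - 1) * qBinom q (2 * N) (k - 1 + N)) * e₂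

theorem hasSum_thetaTerm_mul_qBinom (hq : ‖q‖ < 1) (hq0 : q ≠ 0) (hx : x ≠ 0) (N : ℕ) :
    HasSum (fun k => thetaTerm q x k * qBinom q (2 * N) (k + N))
      (qPochFin x q N * qPochFin (q / x) q N) := by
  induction N with
  | zero =>
    have h₀ : qPochFin x q 0 * qPochFin (q / x) q 0 =
        thetaTerm q x 0 * qBinom q (2 * 0) (0 + 0) := by
      simp [qPochFin_zero, thetaTerm_zero, qBinom_zero hq]
    rw [h₀]
    refine hasSum_single 0 fun k hk => ?_
    rcases lt_or_gt_of_ne hk with hk | hk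
    · simp [qBinom_of_neg hk]
    · simp [qBinom_of_lt (n := 0) hk]
  | succ N ih =>
    have ih_succ := (Equiv.addRight (1 : ℤ)).hasSum_iff.mpr ih
    have ih_pred := (Equiv.subRight (1 : ℤ)).hasSum_iff.mpr ih
    have hcomb := ((ih_succ.mul_left (-(q ^ (N + 1) * x⁻¹))).add
      (ih.mul_left (1 + q ^ (2 * N + 1)))).sub (ih_pred.mul_left (q ^ N * x))
    have hP : qPochFin x q (N + 1) * qPochFin (q / x) q (N + 1) =
        -(q ^ (N + 1) * x⁻¹) * (qPochFin x q N * qPochFin (q / x) q N)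
          + (1 + q ^ (2 * N + 1)) * (qPochFin x q N * qPochFin (q / x) q N)
          - q ^ N * x * (qPochFin x q N * qPochFin (q / x) q N) := by
      rw [qPochFin_succ, qPochFin_succ]
      field_simp
      ring
    rw [hP]
    exact hcomb.congr_fun (thetaTerm_mul_qBinom_succ hq hq0 hx N)

lemma summable_norm_pow_mul (hq : ‖q‖ < 1) (x : ℂ) : Summable fun i : ℕ => ‖q ^ i * x‖ := by
  simpa [norm_mul, norm_pow] using (summable_geometric_of_lt_one (norm_nonneg q) hq).mul_right ‖x‖

lemma tendsto_qPochFin (hq : ‖q‖ < 1) (x : ℂ) :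
    Tendsto (qPochFin x q) atTop (𝓝 (qPochInf x q)) := by
  have h : Multipliable fun i : ℕ => 1 + -(q ^ i * x) :=
    multipliable_one_add_of_summable (by simpa using summable_norm_pow_mul hq x)
  have h' := h.hasProd.tendsto_prod_nat
  simp only [← sub_eq_add_neg] at h'
  exact h'

lemma qPochInf_self_ne_zero (hq : ‖q‖ < 1) : qPochInf q q ≠ 0 := by
  have hf (i : ℕ) : 1 + -(q ^ i * q) ≠ 0 := by
    rw [← sub_eq_add_neg]; exact one_sub_pow_mul_self_ne_zero hq i
  have h := tprod_one_add_ne_zero_of_summable hf (by simpa using summable_norm_pow_mul hq q)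
  simp only [← sub_eq_add_neg] at h
  exact h

lemma exists_norm_qBinom_le (hq : ‖q‖ < 1) : ∃ C, ∀ n j, ‖qBinom q n j‖ ≤ C := by
  have hP := tendsto_qPochFin hq q
  obtain ⟨A, hA⟩ := hP.norm.bddAbove_range
  obtain ⟨B, hB⟩ := (hP.inv₀ (qPochInf_self_ne_zero hq)).norm.bddAbove_range
  have hA' n : ‖qPochFin q q n‖ ≤ A := hA ⟨n, rfl⟩
  have hB' n : ‖(qPochFin q q n)⁻¹‖ ≤ B := hB ⟨n, rfl⟩
  have hA0 : 0 ≤ A := (norm_nonneg _).trans (hA' 0)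
  have hB0 : 0 ≤ B := (norm_nonneg _).trans (hB' 0)
  refine ⟨A * B * B, fun n j => ?_⟩
  unfold qBinom
  split_ifs
  · rw [div_eq_mul_inv, mul_inv, ← mul_assoc, norm_mul, norm_mul]
    gcongr
    exacts [hA' n, hB' _, hB' _]
  · simpa using mul_nonneg (mul_nonneg hA0 hB0) hB0

lemma tendsto_qBinom_central (hq : ‖q‖ < 1) (k : ℤ) :
    Tendsto (fun N : ℕ => qBinom q (2 * N) (k + N)) atTop (𝓝 (qPochInf q q)⁻¹) := by
  have hP {f : ℕ → ℕ} (hf : ∀ b, ∃ N₀, ∀ N ≥ N₀, b ≤ f N) :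
      Tendsto (fun N => qPochFin q q (f N)) atTop (𝓝 (qPochInf q q)) :=
    (tendsto_qPochFin hq q).comp (tendsto_atTop_atTop.mpr hf)
  have hQ := qPochInf_self_ne_zero hq
  have hlim := (hP (f := fun N => 2 * N) fun b => ⟨b, by omega⟩).div
    ((hP (f := fun N => (k + N).toNat) fun b => ⟨b + k.natAbs, by omega⟩).mul
      (hP (f := fun N => 2 * N - (k + N).toNat) fun b => ⟨b + k.natAbs, by omega⟩))
    (mul_ne_zero hQ hQ)
  rw [div_mul_cancel_right₀ hQ] at hlim
  refine hlim.congr' ((eventually_ge_atTop k.natAbs).mono fun N hN => ?_)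
  simp only [Pi.div_apply, qBinom]
  rw [if_pos (by omega)]

lemma summable_norm_thetaTerm (hq : ‖q‖ < 1) (hq0 : q ≠ 0) (hx : x ≠ 0) :
    Summable fun k : ℤ => ‖thetaTerm q x k‖ := by
  have summable_nat {x : ℂ} (hx : x ≠ 0) : Summable fun n : ℕ => ‖thetaTerm q x n‖ := by
    refine summable_of_ratio_norm_eventually_le (r := 1 / 2) (by norm_num) ?_
    have h : Tendsto (fun n : ℕ => ‖q‖ ^ n * ‖x‖) atTop (𝓝 0) := by
      simpa using (tendsto_pow_atTop_nhds_zero_of_lt_one (norm_nonneg q) hq).mul_const ‖x‖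
    filter_upwards [h.eventually_le_const (by norm_num : (0 : ℝ) < 1 / 2)] with n hn
    rw [norm_norm, norm_norm, Nat.cast_succ, thetaTerm_add_one hq0 hx, norm_neg, norm_mul,
      norm_mul, zpow_natCast, norm_pow]
    gcongr
  refine Summable.of_nat_of_neg (summable_nat hx) ?_
  simpa only [thetaTerm_neg hq0] using summable_nat (div_ne_zero hq0 hx)

theorem jt_eq_tsum_thetaTerm (hq : ‖q‖ < 1) (hq0 : q ≠ 0) (hx : x ≠ 0) :
    jt x q = ∑' k, thetaTerm q x k := by
  obtain ⟨C, hC⟩ := exists_norm_qBinom_le hq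
  have hfin := fun N => (hasSum_thetaTerm_mul_qBinom hq hq0 hx N).tsum_eq
  have lim_prod := (tendsto_qPochFin hq x).mul (tendsto_qPochFin hq (q / x))
  have lim_sum : Tendsto (fun N => qPochFin x q N * qPochFin (q / x) q N) atTop
      (𝓝 (∑' k, thetaTerm q x k * (qPochInf q q)⁻¹)) := by
    simp only [← hfin]
    refine tendsto_tsum_of_dominated_convergence
      ((summable_norm_thetaTerm hq hq0 hx).mul_right C)
      (fun k => (tendsto_qBinom_central hq k).const_mul _) (Eventually.of_forall fun N k => ?_)
    rw [norm_mul]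
    gcongr
    exact hC _ _
  rw [jt, tendsto_nhds_unique lim_prod lim_sum, tsum_mul_right,
    inv_mul_cancel_right₀ (qPochInf_self_ne_zero hq)]

theorem hasSum_jt_mul_jt {q' y : ℂ} (hq : ‖q‖ < 1) (hq0 : q ≠ 0) (hx : x ≠ 0) (hq' : ‖q'‖ < 1)
    (hq'0 : q' ≠ 0) (hy : y ≠ 0) :
    HasSum (fun p : ℤ × ℤ => thetaTerm q x p.1 * thetaTerm q' y p.2) (jt x q * jt y q') := by
  have hx' := summable_norm_thetaTerm hq hq0 hx
  have hy' := summable_norm_thetaTerm hq' hq'0 hy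
  rw [jt_eq_tsum_thetaTerm hq hq0 hx, jt_eq_tsum_thetaTerm hq' hq'0 hy,
    tsum_mul_tsum_of_summable_norm hx' hy']
  exact (summable_mul_of_summable_norm hx' hy').hasSum

end JacobiTripleProduct

namespace QuintupleSum

open Complex JacobiTripleProduct

lemma thetaTerm_exp (α β : ℂ) (k : ℤ) :
    thetaTerm (exp α) (-exp β) k = exp (k * (k - 1) / 2 * α + k * β) := by
  have hk : ((k * (k - 1) / 2 : ℤ) : ℂ) = k * (k - 1) / 2 := by
    rw [Int.cast_div (even_iff_two_dvd.mp (Int.even_mul_pred_self k)) two_ne_zero]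
    push_cast
    ring
  have hsign : ((-1 : ℂ) ^ k) * (-1) ^ k = 1 := by rw [← mul_zpow]; norm_num
  rw [thetaTerm, exp_add, ← hk, exp_int_mul, exp_int_mul, show -exp β = -1 * exp β by ring,
    mul_zpow]
  linear_combination (exp α ^ (k * (k - 1) / 2) * exp β ^ k) * hsign

lemma thetaTerm_mul_thetaTerm_mul_thetaTerm {q x y : ℂ} (hq0 : q ≠ 0) (hx : x ≠ 0) (hy : y ≠ 0)
    (i a b : ℤ) :
    thetaTerm q x i * (thetaTerm (q ^ 15) (-(q ^ (3 * i + 9) * x ^ 3 * y⁻¹)) a *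
      thetaTerm (q ^ 10) (q ^ (2 * i + 1) * x ^ 2 * y) b) =
      thetaTerm q x (i + 3 * a + 2 * b) * thetaTerm (q ^ 6) y (b - a) := by
  -- With `q = e^α`, `x = -e^β`, `y = -e^γ` every theta term is a single exponential.
  obtain ⟨α, rfl⟩ : ∃ α, exp α = q := ⟨log q, exp_log hq0⟩
  obtain ⟨β, hβ⟩ : ∃ β, exp β = -x := ⟨log (-x), exp_log (neg_ne_zero.mpr hx)⟩
  obtain ⟨γ, hγ⟩ : ∃ γ, exp γ = -y := ⟨log (-y), exp_log (neg_ne_zero.mpr hy)⟩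
  rw [neg_eq_iff_eq_neg.mp hβ.symm, neg_eq_iff_eq_neg.mp hγ.symm]
  have hA : -(exp α ^ (3 * i + 9) * (-exp β) ^ 3 * (-exp γ)⁻¹) =
      -exp ((3 * i + 9) * α + 3 * β - γ) := by
    rw [exp_sub, exp_add, show (3 : ℂ) * β = (3 : ℕ) * β by norm_num, exp_nat_mul,
      ← exp_int_mul]
    push_cast
    ring
  have hB : exp α ^ (2 * i + 1) * (-exp β) ^ 2 * (-exp γ) =
      -exp ((2 * i + 1) * α + 2 * β + γ) := by
    rw [exp_add, exp_add, show (2 : ℂ) * β = (2 : ℕ) * β by norm_num, exp_nat_mul, ← exp_int_mul]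
    push_cast
    ring
  simp only [← exp_nat_mul α, hA, hB, thetaTerm_exp, ← exp_add]
  congr 1
  push_cast
  ring

/-- Inverse: `n - 2m = i + 5a`, so `i` is the residue of `n - 2m` in `{-2, …, 2}`. -/
def quintLatticeEquiv : Finset.Icc (-2 : ℤ) 2 × ℤ × ℤ ≃ ℤ × ℤ where
  toFun z := (z.1 + 3 * z.2.1 + 2 * z.2.2, z.2.2 - z.2.1)
  invFun p :=
    (⟨(p.1 - 2 * p.2 + 2) % 5 - 2, by rw [Finset.mem_Icc]; omega⟩,
      (p.1 - 2 * p.2 + 2) / 5, p.2 + (p.1 - 2 * p.2 + 2) / 5)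
  left_inv := by
    rintro ⟨⟨i, hi⟩, a, b⟩
    rw [Finset.mem_Icc] at hi
    ext <;> simp only <;> omega
  right_inv := by
    rintro ⟨n, m⟩
    ext <;> simp only <;> omega

end QuintupleSum

open JacobiTripleProduct QuintupleSum in
theorem jt_quint_sum (q x y : ℂ) (hq0 : 0 < ‖q‖)
    (hq1 : ‖q‖ < 1) (hx : x ≠ 0) (hy : y ≠ 0) :
    jt x q * jt y (q ^ 6) =
      ∑ i ∈ Finset.Icc (-2 : ℤ) 2, (-1) ^ i * q ^ ((i ^ 2 - i) / 2) * x ^ i *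
        jt (-(q ^ (3 * i + 9) * x ^ 3 * y⁻¹)) (q ^ 15) *
        jt (q ^ (2 * i + 1) * x ^ 2 * y) (q ^ 10) := by
  have hq : q ≠ 0 := norm_pos_iff.mp hq0
  have hpow {n : ℕ} (hn : n ≠ 0) : ‖q ^ n‖ < 1 := by
    rw [norm_pow]; exact pow_lt_one₀ (norm_nonneg q) hq1 hn
  have hlattice := quintLatticeEquiv.hasSum_iff.mpr
    (hasSum_jt_mul_jt hq1 hq hx (hpow (by norm_num)) (pow_ne_zero 6 hq) hy)
  have hfiber (i : Finset.Icc (-2 : ℤ) 2) := by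
    have hA : -(q ^ (3 * (i : ℤ) + 9) * x ^ 3 * y⁻¹) ≠ 0 := by simp [zpow_ne_zero _ hq, hx, hy]
    have hB : q ^ (2 * (i : ℤ) + 1) * x ^ 2 * y ≠ 0 := by simp [zpow_ne_zero _ hq, hx, hy]
    exact ((hasSum_jt_mul_jt (hpow (by norm_num)) (pow_ne_zero 15 hq) hA (hpow (by norm_num))
      (pow_ne_zero 10 hq) hB).mul_left (thetaTerm q x i)).congr_fun
        fun p => (thetaTerm_mul_thetaTerm_mul_thetaTerm hq hx hy i p.1 p.2).symm
  rw [← (hlattice.prod_fiberwise hfiber).tsum_eq, tsum_fintype,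
    ← Finset.sum_coe_sort (Finset.Icc (-2 : ℤ) 2)]
  refine Finset.sum_congr rfl fun i _ => ?_
  rw [thetaTerm, show (i : ℤ) * (i - 1) = (i : ℤ) ^ 2 - i by ring]
  ring
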